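/- Consider a greedy run on a 2NC-TAP instance, a link ℓ ∈ L, and let Q be the set of internal nodes of the tree path T(ℓ). For each u ∈ Q let h(u) be the largest index j such that ℓ crosses 𝒫̂^j_u. Then: (a) for each u ∈ Q, Σ_{𝒫 ∈ Ptn⊇(comps(T−u)) crossed by ℓ} y(𝒫) = wgt(𝒫̂^{h(u)}_u); and (b) if u_1, …, u_{|Q|} is the ordering of Q that is the reverse of the order in which the run assigns the weights wgt(𝒫̂^{h(u)}_u), u ∈ Q, then wgt(𝒫̂^{h(u_j)}_{u_j}) ≤ cost(ℓ)/j for each j ∈ {1, …, |Q|}. -/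

import Mathlib

/-!
(a) The partitions of `u` only coarsen during the run, so the indices `j` for which `ℓ` crosses
`𝒫̂^j_u` form an initial segment `1, …, h(u)`, and the dual values over it telescope to
`wgt(𝒫̂^{h(u)}_u)`.

(b) Let `i` be the iteration at which `wgt(𝒫̂^{h(u_j)}_{u_j})` is assigned. The final weights of
`u_1, …, u_j` are assigned at iteration `i` or later, so `ℓ` still crosses their partitions at
iteration `i` and `|inc^i(ℓ)| ≥ j`. The greedy choice of `ℓ_i` then gives
`wgt = cost(ℓ_i)/|inc^i(ℓ_i)| ≤ cost(ℓ)/|inc^i(ℓ)| ≤ cost(ℓ)/j`.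
-/

open scoped Classical
open Finset

namespace TwoNCTAP

variable {V : Type*}

/-- The graph `H` with the vertex `u` "deleted": all edges incident to `u` are removed,
so that `u` becomes an isolated vertex. -/
def delVert (H : SimpleGraph V) (u : V) : SimpleGraph V where
  Adj a b := H.Adj a b ∧ a ≠ u ∧ b ≠ u
  symm := ⟨by rintro a b ⟨h, ha, hb⟩; exact ⟨h.symm, hb, ha⟩⟩
  loopless := ⟨by rintro a ⟨h, -, -⟩; exact H.irrefl h⟩

/-- The partition of `V ∖ {u}` into the vertex sets of the connected components of `H − u`. -/
def compPartition (H : SimpleGraph V) (u : V) : Set (Set V) :=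
  {S | ∃ v, v ≠ u ∧ S = {w | (delVert H u).Reachable v w}}

/-- `P` is a partition of the set `S`. -/
def IsPartitionOf (P : Set (Set V)) (S : Set V) : Prop :=
  (∀ B ∈ P, B.Nonempty) ∧ (∀ B ∈ P, B ⊆ S) ∧ ∀ v ∈ S, ∃! B : Set V, B ∈ P ∧ v ∈ B

/-- `P ∈ Ptn⊇(comps(T−u))`: `P` is a partition of `V ∖ {u}` each of whose blocks is a
union of vertex sets of connected components of `T − u`. -/
def PtnSup (T : SimpleGraph V) (u : V) (P : Set (Set V)) : Prop :=
  IsPartitionOf P {v | v ≠ u} ∧ ∀ B ∈ compPartition T u, ∃ C ∈ P, B ⊆ C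

/-- An edge `e` crosses the partition `P` if its two endpoints lie in different blocks of `P`. -/
def Crosses (P : Set (Set V)) (e : Sym2 V) : Prop :=
  ∃ v w, e = s(v, w) ∧ ∃ B ∈ P, ∃ C ∈ P, B ≠ C ∧ v ∈ B ∧ w ∈ C

/-- `u` is a non-leaf node of `T`. -/
def NonLeaf (T : SimpleGraph V) (u : V) : Prop := 1 < (T.neighborSet u).ncard

/-- The links of the instance: the edges of `G` that are not edges of the tree `T`. -/
def links (G T : SimpleGraph V) : Set (Sym2 V) := G.edgeSet \ T.edgeSet

variable [Fintype V]

/-- Feasibility for the partition LP (P) of the 2NC-TAP instance `(G, T, cost)`. -/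
def FeasibleP (G T : SimpleGraph V) (x : Sym2 V → ℝ) : Prop :=
  (∀ ℓ ∈ links G T, 0 ≤ x ℓ) ∧
  ∀ u : V, NonLeaf T u → ∀ P : Set (Set V), PtnSup T u P →
    (P.ncard : ℝ) - 1 ≤
      ∑ ℓ ∈ Finset.univ.filter (fun ℓ : Sym2 V => ℓ ∈ links G T ∧ Crosses P ℓ), x ℓ


/-- The tree `T` together with a set `F` of links added as edges. -/
def withLinks (T : SimpleGraph V) (F : Set (Sym2 V)) : SimpleGraph V :=
  T ⊔ SimpleGraph.fromEdgeSet F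

/-- The current partition `𝒫^i_u` (0-indexed): the partition of `V ∖ {u}` into the vertex
sets of the connected components of `(T ∪ {ℓ_0, …, ℓ_{i−1}}) − u`. -/
def curPtn {m : ℕ} (T : SimpleGraph V) (ℓseq : Fin m → Sym2 V) (i : ℕ) (u : V) :
    Set (Set V) :=
  compPartition (withLinks T {e | ∃ j : Fin m, (j : ℕ) < i ∧ ℓseq j = e}) u

/-- `inc^i(e)`: the set of non-leaf nodes `u` of `T` whose current partition (at the start
of iteration `i`, 0-indexed) is crossed by the link `e`. -/
def incSet {m : ℕ} (T : SimpleGraph V) (ℓseq : Fin m → Sym2 V) (i : ℕ)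
    (e : Sym2 V) : Set V :=
  {u | NonLeaf T u ∧ Crosses (curPtn T ℓseq i u) e}

/-- A greedy run on the 2NC-TAP instance `(G, T, cost)`: a sequence of distinct links
`ℓ_0, …, ℓ_{m−1}` such that each `ℓ_i` minimizes the cost-coverage ratio at iteration `i`,
and at the end every current partition is trivial (i.e. `T` plus the picked links
is 2-node-connected). -/
def IsGreedyRun (G T : SimpleGraph V) (cost : Sym2 V → ℝ) (m : ℕ)
    (ℓseq : Fin m → Sym2 V) : Prop :=
  Function.Injective ℓseq ∧
  (∀ i, ℓseq i ∈ links G T) ∧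
  (∀ i : Fin m,
    (incSet T ℓseq (i : ℕ) (ℓseq i)).Nonempty ∧
    ∀ e ∈ links G T, (incSet T ℓseq (i : ℕ) e).Nonempty →
      cost (ℓseq i) / ((incSet T ℓseq (i : ℕ) (ℓseq i)).ncard : ℝ)
        ≤ cost e / ((incSet T ℓseq (i : ℕ) e).ncard : ℝ)) ∧
  ∀ u : V, NonLeaf T u → curPtn T ℓseq m u = {{v | v ≠ u}}

/-- `ν(u)`: the number of connected components of `T − u`. -/
noncomputable def nblocks (T : SimpleGraph V) (u : V) : ℕ := (compPartition T u).ncard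


/-- The dual values associated with a nondecreasing sequence `w` of assigned weights:
`yOf w 0 = w 0` and `yOf w j = w j − w (j−1)` for `j ≥ 1`. -/
def yOf {k : ℕ} (w : Fin k → ℝ) (j : Fin k) : ℝ :=
  if (j : ℕ) = 0 then w j
  else w j - w ⟨(j : ℕ) - 1, lt_of_le_of_lt (Nat.sub_le _ _) j.isLt⟩

/-- `u` is an internal node of the tree path `T(e)` between the endpoints of the link `e`:
`u` is distinct from both endpoints and separates them in `T`. -/
def InternalNode (T : SimpleGraph V) (e : Sym2 V) (u : V) : Prop :=
  ∃ v w : V, e = s(v, w) ∧ u ≠ v ∧ u ≠ w ∧ ¬ (delVert T u).Reachable v w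

end TwoNCTAP

namespace TwoNCTAP

variable {V : Type*}

lemma eq_of_reachable_delVert {H : SimpleGraph V} {u x : V}
    (h : (delVert H u).Reachable u x) : u = x := by
  obtain ⟨_ | ⟨hadj, -⟩⟩ := h
  · rfl
  · exact absurd rfl hadj.2.1

lemma ne_of_reachable_delVert {H : SimpleGraph V} {u a b : V}
    (h : (delVert H u).Reachable a b) (ha : a ≠ u) : b ≠ u := by
  rintro rfl
  exact ha (eq_of_reachable_delVert h.symm).symm

lemma delVert_mono {H H' : SimpleGraph V} (h : H ≤ H') (u : V) :
    delVert H u ≤ delVert H' u :=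
  fun _ _ hab => ⟨h hab.1, hab.2⟩

lemma setOf_reachable_eq {H : SimpleGraph V} {a b : V} (h : H.Reachable a b) :
    {x | H.Reachable a x} = {x | H.Reachable b x} :=
  Set.ext fun _ => ⟨h.symm.trans, h.trans⟩

lemma crosses_compPartition_iff {H : SimpleGraph V} {u : V} {e : Sym2 V} :
    Crosses (compPartition H u) e ↔
      ∃ a b : V, e = s(a, b) ∧ a ≠ u ∧ b ≠ u ∧ ¬ (delVert H u).Reachable a b := by
  constructor
  · rintro ⟨a, b, rfl, _, ⟨va, hva, rfl⟩, _, ⟨vb, hvb, rfl⟩, hne, ha, hb⟩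
    refine ⟨a, b, rfl, ne_of_reachable_delVert ha hva, ne_of_reachable_delVert hb hvb,
      fun hab => hne (setOf_reachable_eq ((ha.trans hab).trans hb.symm))⟩
  · rintro ⟨a, b, rfl, ha, hb, hab⟩
    refine ⟨a, b, rfl, _, ⟨a, ha, rfl⟩, _, ⟨b, hb, rfl⟩, fun heq => hab ?_,
      SimpleGraph.Reachable.refl a, SimpleGraph.Reachable.refl b⟩
    have hb : b ∈ {x | (delVert H u).Reachable a x} := heq ▸ SimpleGraph.Reachable.refl b
    exact hb

lemma crosses_compPartition_of_le {H H' : SimpleGraph V} (h : H ≤ H') {u : V} {e : Sym2 V}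
    (hc : Crosses (compPartition H' u) e) : Crosses (compPartition H u) e := by
  rw [crosses_compPartition_iff] at hc ⊢
  obtain ⟨a, b, rfl, ha, hb, hab⟩ := hc
  exact ⟨a, b, rfl, ha, hb, fun h' => hab (h'.mono (delVert_mono h u))⟩

lemma reachable_delVert_of_notMem_support {H : SimpleGraph V} {u a b : V} (p : H.Walk a b)
    (hu : u ∉ p.support) : (delVert H u).Reachable a b := by
  refine ⟨p.transfer _ fun e he => ?_⟩
  induction e with
  | h x y =>
    exact ⟨p.edges_subset_edgeSet he, fun hx => hu (hx ▸ p.fst_mem_support_of_mem_edges he),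
      fun hy => hu (hy ▸ p.snd_mem_support_of_mem_edges he)⟩

/-- An internal vertex of a path has two distinct neighbours on it: its predecessor and its
successor. -/
lemma nonLeaf_of_internalNode [Finite V] {T : SimpleGraph V} (hT : T.Connected)
    {e : Sym2 V} {u : V} (h : InternalNode T e u) : NonLeaf T u := by
  obtain ⟨v, w, -, huv, huw, hsep⟩ := h
  obtain ⟨p, hp⟩ := hT.preconnected.exists_isPath v w
  have hu : u ∈ p.support := by
    by_contra hu
    exact hsep (reachable_delVert_of_notMem_support p hu)
  obtain ⟨n, rfl, hn⟩ := SimpleGraph.Walk.mem_support_iff_exists_getVert.1 hu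
  have hn0 : n ≠ 0 := by rintro rfl; exact huv p.getVert_zero
  have hnlen : n < p.length := lt_of_le_of_ne hn fun h => huw (h ▸ p.getVert_length)
  have hpred : T.Adj (p.getVert (n - 1)) (p.getVert n) := by
    simpa [Nat.sub_add_cancel (Nat.pos_of_ne_zero hn0)] using
      p.adj_getVert_succ (i := n - 1) (by omega)
  refine (Set.one_lt_ncard_iff (Set.toFinite _)).2
    ⟨_, _, hpred.symm, p.adj_getVert_succ hnlen, fun heq => ?_⟩
  have := hp.getVert_injOn (by simp; omega) (by simp; omega) heq
  omega

lemma sum_Iic_yOf {k : ℕ} (w : Fin k → ℝ) (j : Fin k) :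
    ∑ i ∈ Iic j, yOf w i = w j := by
  obtain ⟨n, hn⟩ := j
  induction n with
  | zero =>
    have hIic : Iic (⟨0, hn⟩ : Fin k) = {⟨0, hn⟩} := by
      ext i
      simp [Fin.le_def, Fin.ext_iff]
    rw [hIic, sum_singleton, yOf, if_pos rfl]
  | succ n ih =>
    have hIio : Iio (⟨n + 1, hn⟩ : Fin k) = Iic ⟨n, by omega⟩ := by
      ext i
      simp only [mem_Iio, mem_Iic, Fin.lt_def, Fin.le_def]
      omega
    rw [Iic_eq_cons_Iio, sum_cons, hIio, ih, yOf, if_neg n.succ_ne_zero]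
    simp

lemma filter_eq_Iic_of_isGreatest {α : Type*} [Fintype α] [LinearOrder α]
    [LocallyFiniteOrderBot α] {p : α → Prop} [DecidablePred p]
    (hp : ∀ a b, a ≤ b → p b → p a) {a₀ : α} (ha₀ : IsGreatest {a | p a} a₀) :
    univ.filter p = Iic a₀ := by
  ext a
  simp only [mem_filter, mem_univ, true_and, mem_Iic]
  exact ⟨fun ha => ha₀.2 ha, fun ha => hp a a₀ ha ha₀.1⟩

lemma succ_le_ncard_of_mapsTo {β : Type*} [Finite β] {q : ℕ} {f : Fin q → β}
    (hf : Function.Injective f) {j : Fin q} {t : Set β} (ht : ∀ j' ≤ j, f j' ∈ t) :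
    (j : ℕ) + 1 ≤ t.ncard := by
  have := Set.ncard_le_ncard_of_injOn f (s := ↑(Iic j)) (fun j' hj' => ht j' (mem_Iic.1 hj'))
    hf.injOn (Set.toFinite t)
  rwa [Set.ncard_coe_finset, Fin.card_Iic] at this

lemma crosses_curPtn_of_le {m : ℕ} (T : SimpleGraph V) (ℓseq : Fin m → Sym2 V)
    {i i' : ℕ} (hi : i ≤ i') {u : V} {e : Sym2 V}
    (hc : Crosses (curPtn T ℓseq i' u) e) : Crosses (curPtn T ℓseq i u) e := by
  refine crosses_compPartition_of_le (sup_le_sup_left ?_ T) hc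
  refine SimpleGraph.fromEdgeSet_mono ?_
  rintro _ ⟨j, hj, rfl⟩
  exact ⟨j, hj.trans_le hi, rfl⟩

lemma IsGreedyRun.ratio_le {G T : SimpleGraph V} {cost : Sym2 V → ℝ} {m : ℕ}
    {ℓseq : Fin m → Sym2 V} (hrun : IsGreedyRun G T cost m ℓseq) (i : Fin m) {e : Sym2 V}
    (he : e ∈ links G T) (hne : (incSet T ℓseq i e).Nonempty) :
    cost (ℓseq i) / ((incSet T ℓseq i (ℓseq i)).ncard : ℝ)
      ≤ cost e / ((incSet T ℓseq i e).ncard : ℝ) :=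
  (hrun.2.2.1 i).2 e he hne

variable [Fintype V]

/-- Here `sig u j` is the iteration at which `𝒫̂^{j+1}_u` receives its weight `w u j`, `time u`
is the iteration at which `wgt(𝒫̂^{h(u)}_u)` is assigned, and `wfin u` is that weight. -/
theorem dual_values_of_link_general
    (G T : SimpleGraph V) (hT : T.IsTree)
    (cost : Sym2 V → ℝ) (hcost : ∀ e ∈ links G T, 0 ≤ cost e)
    (m : ℕ) (ℓseq : Fin m → Sym2 V) (hrun : IsGreedyRun G T cost m ℓseq)
    (sig : (u : V) → Fin (nblocks T u - 1) → Fin m)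
    (hsig : ∀ u : V, NonLeaf T u → StrictMono (sig u) ∧
      ∀ i : Fin m, Crosses (curPtn T ℓseq (i : ℕ) u) (ℓseq i) ↔ ∃ j, sig u j = i)
    (w : (u : V) → Fin (nblocks T u - 1) → ℝ)
    (hw : ∀ (u : V) (j : Fin (nblocks T u - 1)),
      w u j = cost (ℓseq (sig u j)) /
        ((incSet T ℓseq ((sig u j : Fin m) : ℕ) (ℓseq (sig u j))).ncard : ℝ))
    (ℓ : Sym2 V) (hℓ : ℓ ∈ links G T)
    (time : V → ℕ) (wfin : V → ℝ)
    (htw : ∀ u : V, InternalNode T ℓ u → ∃ j : Fin (nblocks T u - 1),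
      Crosses (curPtn T ℓseq ((sig u j : Fin m) : ℕ) u) ℓ ∧
      (∀ j' : Fin (nblocks T u - 1),
        Crosses (curPtn T ℓseq ((sig u j' : Fin m) : ℕ) u) ℓ → j' ≤ j) ∧
      time u = ((sig u j : Fin m) : ℕ) ∧ wfin u = w u j) :
    (∀ u : V, InternalNode T ℓ u →
      ∑ j ∈ Finset.univ.filter
          (fun j : Fin (nblocks T u - 1) =>
            Crosses (curPtn T ℓseq ((sig u j : Fin m) : ℕ) u) ℓ),
        yOf (w u) j = wfin u) ∧
    (∀ (q : ℕ) (ord : Fin q → V),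
      (∀ j : Fin q, InternalNode T ℓ (ord j)) →
      (∀ u : V, InternalNode T ℓ u → ∃ j : Fin q, ord j = u) →
      Function.Injective ord →
      (∀ j j' : Fin q, j ≤ j' → time (ord j') ≤ time (ord j)) →
      ∀ j : Fin q, wfin (ord j) ≤ cost ℓ / ((j : ℕ) + 1)) := by
  have hnl : ∀ u, InternalNode T ℓ u → NonLeaf T u :=
    fun u hu => nonLeaf_of_internalNode hT.connected hu
  refine ⟨fun u hu => ?_, fun q ord hord _ hinj htime j => ?_⟩
  · obtain ⟨j₀, hcross, hmax, -, hwfin⟩ := htw u hu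
    have hdown : ∀ a b : Fin (nblocks T u - 1), a ≤ b →
        Crosses (curPtn T ℓseq (sig u b) u) ℓ → Crosses (curPtn T ℓseq (sig u a) u) ℓ :=
      fun a b hab => crosses_curPtn_of_le T ℓseq ((hsig u (hnl u hu)).1.monotone hab)
    rw [filter_eq_Iic_of_isGreatest hdown ⟨hcross, hmax⟩, sum_Iic_yOf, hwfin]
  · obtain ⟨j₀, hcross, -, htj, hwfin⟩ := htw (ord j) (hord j)
    set i := sig (ord j) j₀
    have hinc : ∀ j' ≤ j, ord j' ∈ incSet T ℓseq i ℓ := by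
      intro j' hj'
      obtain ⟨j₁, hcross', -, htj', -⟩ := htw (ord j') (hord j')
      exact ⟨hnl _ (hord j'), crosses_curPtn_of_le T ℓseq
        (htj ▸ htj' ▸ htime j' j hj') hcross'⟩
    have hcard : ((j : ℕ) : ℝ) + 1 ≤ (incSet T ℓseq i ℓ).ncard := by
      exact_mod_cast succ_le_ncard_of_mapsTo hinj hinc
    calc wfin (ord j) = cost (ℓseq i) / ((incSet T ℓseq i (ℓseq i)).ncard : ℝ) :=
          hwfin.trans (hw _ _)
      _ ≤ cost ℓ / (incSet T ℓseq i ℓ).ncard := hrun.ratio_le i hℓ ⟨ord j, hinc j le_rfl⟩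
      _ ≤ cost ℓ / ((j : ℕ) + 1) := div_le_div_of_nonneg_left (hcost ℓ hℓ) (by positivity) hcard

/-- Fix a greedy run and a link `ℓ`, and let `Q` be the set of internal
nodes of `T(ℓ)`. For `u ∈ Q` let `h(u)` be the largest index `j` such that `ℓ` crosses
`𝒫̂^j_u`, let `time u` be the iteration in which `wgt(𝒫̂^{h(u)}_u)` is assigned and
`wfin u = wgt(𝒫̂^{h(u)}_u)`. Then: (a) for each `u ∈ Q`, the sum of the dual values
`y(𝒫)` over the partitions `𝒫` of `u` crossed by `ℓ` equals `wgt(𝒫̂^{h(u)}_u)`; and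
(b) for any enumeration `u_1, …, u_{|Q|}` of `Q` that is the reverse of the order in which
the run assigns the weights `wgt(𝒫̂^{h(u)}_u)`, we have
`wgt(𝒫̂^{h(u_j)}_{u_j}) ≤ cost(ℓ)/j`. -/
theorem dual_values_of_link
    (G T : SimpleGraph V) (hV : 3 ≤ Fintype.card V) (hTG : T ≤ G) (hT : T.IsTree)
    (cost : Sym2 V → ℝ) (hcost : ∀ e ∈ links G T, 0 ≤ cost e)
    (m : ℕ) (ℓseq : Fin m → Sym2 V) (hrun : IsGreedyRun G T cost m ℓseq)
    (sig : (u : V) → Fin (nblocks T u - 1) → Fin m)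
    (hsig : ∀ u : V, NonLeaf T u → StrictMono (sig u) ∧
      ∀ i : Fin m, Crosses (curPtn T ℓseq (i : ℕ) u) (ℓseq i) ↔ ∃ j, sig u j = i)
    (w : (u : V) → Fin (nblocks T u - 1) → ℝ)
    (hw : ∀ (u : V) (j : Fin (nblocks T u - 1)),
      w u j = cost (ℓseq (sig u j)) /
        ((incSet T ℓseq ((sig u j : Fin m) : ℕ) (ℓseq (sig u j))).ncard : ℝ))
    (ℓ : Sym2 V) (hℓ : ℓ ∈ links G T)
    (time : V → ℕ) (wfin : V → ℝ)
    (htw : ∀ u : V, InternalNode T ℓ u → ∃ j : Fin (nblocks T u - 1),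
      Crosses (curPtn T ℓseq ((sig u j : Fin m) : ℕ) u) ℓ ∧
      (∀ j' : Fin (nblocks T u - 1),
        Crosses (curPtn T ℓseq ((sig u j' : Fin m) : ℕ) u) ℓ → j' ≤ j) ∧
      time u = ((sig u j : Fin m) : ℕ) ∧ wfin u = w u j) :
    (∀ u : V, InternalNode T ℓ u →
      ∑ j ∈ Finset.univ.filter
          (fun j : Fin (nblocks T u - 1) =>
            Crosses (curPtn T ℓseq ((sig u j : Fin m) : ℕ) u) ℓ),
        yOf (w u) j = wfin u) ∧
    (∀ (q : ℕ) (ord : Fin q → V),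
      (∀ j : Fin q, InternalNode T ℓ (ord j)) →
      (∀ u : V, InternalNode T ℓ u → ∃ j : Fin q, ord j = u) →
      Function.Injective ord →
      (∀ j j' : Fin q, j ≤ j' → time (ord j') ≤ time (ord j)) →
      ∀ j : Fin q, wfin (ord j) ≤ cost ℓ / ((j : ℕ) + 1)) :=
  dual_values_of_link_general G T hT cost hcost m ℓseq hrun sig hsig w hw ℓ hℓ time wfin htw

end TwoNCTAP
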